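/- arXiv:1903.11577 — 4 statements merged into one kernel-verified Lean document; each statement's English description precedes it below -/
import Mathlib

section
/- Let Z ~ Poisson(μ) and G ~ Geom(1−q) be independent, and B = min(Z,G). Then the conditional distribution of B given the event {Z ≤ G} is Poisson with parameter qμ, i.e., P(B = z | Z ≤ G) = e^{−qμ}(qμ)^z / z! for all z ∈ ℕ. -/
/-!
Since `P(G ≥ k) = q ^ k`, independence gives `P(Z = k, Z ≤ G) = P(Z = k) q ^ k`, and
`e^{-m} m^k / k! · q^k = e^{-(1-q)m} · e^{-qm} (qm)^k / k!` is Poisson thinning: the joint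
probabilities are the Poisson(`q m`) weights scaled by `P(Z ≤ G) = e^{-(1-q)m}`.
-/

open MeasureTheory ProbabilityTheory

theorem setOf_le_inter_min_eq {Ω : Type*} (Z G : Ω → ℕ) (z : ℕ) :
    {ω | Z ω ≤ G ω} ∩ {ω | min (Z ω) (G ω) = z} = {ω | Z ω = z} ∩ {ω | z ≤ G ω} := by
  ext ω
  simp only [Set.mem_inter_iff, Set.mem_ofPred_eq]
  omega

section NatValued

variable {Ω : Type*} [MeasurableSpace Ω] {P : Measure Ω}

theorem measure_setOf_le_eq_tsum {G : Ω → ℕ} (hG : Measurable G) (z : ℕ) :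
    P {ω | z ≤ G ω} = ∑' k, P {ω | G ω = z + k} := by
  have hset : {ω | z ≤ G ω} = ⋃ k, {ω | G ω = z + k} := by
    ext ω
    simp only [Set.mem_ofPred_eq, Set.mem_iUnion]
    exact ⟨fun h => ⟨G ω - z, by omega⟩, fun ⟨k, hk⟩ => by omega⟩
  rw [hset, measure_iUnion]
  · intro i j hij
    simp only [Function.onFun, Set.disjoint_left, Set.mem_ofPred_eq]
    omega
  · exact fun k => hG (measurableSet_singleton _)

theorem measure_setOf_le_eq_tsum_inter {Z G : Ω → ℕ} (hZ : Measurable Z) (hG : Measurable G) :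
    P {ω | Z ω ≤ G ω} = ∑' k, P ({ω | Z ω = k} ∩ {ω | k ≤ G ω}) := by
  have hset : {ω | Z ω ≤ G ω} = ⋃ k, ({ω | Z ω = k} ∩ {ω | k ≤ G ω}) := by
    ext ω
    simp only [Set.mem_ofPred_eq, Set.mem_iUnion, Set.mem_inter_iff]
    exact ⟨fun h => ⟨Z ω, rfl, h⟩, fun ⟨k, hk, hk'⟩ => hk ▸ hk'⟩
  rw [hset, measure_iUnion]
  · intro i j hij
    simp only [Function.onFun, Set.disjoint_left, Set.mem_inter_iff, Set.mem_ofPred_eq]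
    omega
  · exact fun k => (hZ (measurableSet_singleton k)).inter (hG measurableSet_Ici)

theorem measure_setOf_le_of_geometric [IsProbabilityMeasure P] {G : Ω → ℕ} (hGmeas : Measurable G)
    {q : ℝ} (hq : 0 ≤ q) (hG : ∀ k : ℕ, P {ω | G ω = k} = ENNReal.ofReal (q ^ k * (1 - q)))
    (z : ℕ) : P {ω | z ≤ G ω} = ENNReal.ofReal (q ^ z) := by
  -- `P(G = z + k) = q ^ z P(G = k)` and the law has total mass `1`: no geometric series needed.
  have htotal : ∑' k, P {ω | G ω = k} = 1 := by
    simpa using (measure_setOf_le_eq_tsum (P := P) hGmeas 0).symm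
  calc P {ω | z ≤ G ω}
      = ∑' k, ENNReal.ofReal (q ^ z) * P {ω | G ω = k} := by
        rw [measure_setOf_le_eq_tsum hGmeas]
        congr 1 with k
        rw [hG, hG, pow_add, mul_assoc, ENNReal.ofReal_mul (by positivity)]
    _ = ENNReal.ofReal (q ^ z) := by rw [ENNReal.tsum_mul_left, htotal, mul_one]

end NatValued

theorem tsum_ofReal_poisson {r : ℝ} (hr : 0 ≤ r) :
    ∑' n : ℕ, ENNReal.ofReal (Real.exp (-r) * r ^ n / n.factorial) = 1 := by
  have hsum : HasSum (fun n : ℕ => Real.exp (-r) * r ^ n / n.factorial) 1 :=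
    hasSum_one_poissonMeasure ⟨r, hr⟩
  rw [← ENNReal.ofReal_tsum_of_nonneg (fun n => by positivity) hsum.summable, hsum.tsum_eq,
    ENNReal.ofReal_one]

theorem poisson_mul_pow_eq_thinned {m : ℝ} (hm : 0 ≤ m) (q : ℝ) (n : ℕ) :
    ENNReal.ofReal (Real.exp (-m) * m ^ n / n.factorial) * ENNReal.ofReal (q ^ n) =
      ENNReal.ofReal (Real.exp (-((1 - q) * m))) *
        ENNReal.ofReal (Real.exp (-(q * m)) * (q * m) ^ n / n.factorial) := by
  rw [← ENNReal.ofReal_mul (by positivity), ← ENNReal.ofReal_mul (by positivity)]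
  congr 1
  have hexp : Real.exp (-m) = Real.exp (-((1 - q) * m)) * Real.exp (-(q * m)) := by
    rw [← Real.exp_add]; ring_nf
  rw [hexp, mul_pow]
  ring

theorem min_poisson_geometric_cond_poisson_general
    {Ω : Type*} [MeasurableSpace Ω] (P : Measure Ω) [IsProbabilityMeasure P]
    (Z G : Ω → ℕ) (hZmeas : Measurable Z) (hGmeas : Measurable G)
    (m q : ℝ) (hm : 0 < m) (hq0 : 0 < q)
    (hZ : ∀ k : ℕ, P {ω | Z ω = k} =
      ENNReal.ofReal (Real.exp (-m) * m ^ k / (Nat.factorial k)))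
    (hG : ∀ k : ℕ, P {ω | G ω = k} = ENNReal.ofReal (q ^ k * (1 - q)))
    (hindep : IndepFun Z G P) :
    ∀ z : ℕ, (P[|{ω | Z ω ≤ G ω}]) {ω | min (Z ω) (G ω) = z} =
      ENNReal.ofReal (Real.exp (-(q * m)) * (q * m) ^ z / (Nat.factorial z)) := by
  have hjoint : ∀ k : ℕ, P ({ω | Z ω = k} ∩ {ω | k ≤ G ω}) =
      ENNReal.ofReal (Real.exp (-((1 - q) * m))) *
        ENNReal.ofReal (Real.exp (-(q * m)) * (q * m) ^ k / k.factorial) := fun k => by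
    calc P ({ω | Z ω = k} ∩ {ω | k ≤ G ω}) = P {ω | Z ω = k} * P {ω | k ≤ G ω} :=
          hindep.measure_inter_preimage_eq_mul _ _ (measurableSet_singleton k) measurableSet_Ici
      _ = _ := by
        rw [hZ, measure_setOf_le_of_geometric hGmeas hq0.le hG, poisson_mul_pow_eq_thinned hm.le]
  have hcond : P {ω | Z ω ≤ G ω} = ENNReal.ofReal (Real.exp (-((1 - q) * m))) := by
    rw [measure_setOf_le_eq_tsum_inter hZmeas hGmeas]
    simp_rw [hjoint]
    rw [ENNReal.tsum_mul_left, tsum_ofReal_poisson (by positivity), mul_one]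
  intro z
  rw [cond_apply (measurableSet_le hZmeas hGmeas), setOf_le_inter_min_eq, hjoint, hcond,
    ENNReal.inv_mul_cancel_left (by simpa using Real.exp_pos _) ENNReal.ofReal_ne_top]

/-- For independent `Z ~ Poisson(μ)` and `G ~ Geom(1-q)`, the conditional
distribution of `B = min(Z, G)` given `{Z ≤ G}` is Poisson with parameter `q μ`. -/
theorem min_poisson_geometric_cond_poisson
    {Ω : Type*} [MeasurableSpace Ω] (P : Measure Ω) [IsProbabilityMeasure P]
    (Z G : Ω → ℕ) (hZmeas : Measurable Z) (hGmeas : Measurable G)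
    (m q : ℝ) (hm : 0 < m) (hq0 : 0 < q) (hq1 : q < 1)
    (hZ : ∀ k : ℕ, P {ω | Z ω = k} =
      ENNReal.ofReal (Real.exp (-m) * m ^ k / (Nat.factorial k)))
    (hG : ∀ k : ℕ, P {ω | G ω = k} = ENNReal.ofReal (q ^ k * (1 - q)))
    (hindep : IndepFun Z G P) :
    ∀ z : ℕ, (P[|{ω | Z ω ≤ G ω}]) {ω | min (Z ω) (G ω) = z} =
      ENNReal.ofReal (Real.exp (-(q * m)) * (q * m) ^ z / (Nat.factorial z)) :=
  min_poisson_geometric_cond_poisson_general P Z G hZmeas hGmeas m q hm hq0 hZ hG hindep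
end

section
/- Let Z ~ Poisson(μ) and G ~ Geom(1−q) be independent and B = min(Z,G). Then the moment generating function of B satisfies E[e^{ξB}] = e^{−(1−q)μ} e^{−(1−e^ξ)qμ} + (1−q)/(1−q e^ξ) · (1 − e^{−(1−q e^ξ)μ}) for all ξ with q e^ξ < 1. -/
open MeasureTheory ProbabilityTheory

lemma tsum_pow_div_factorial' (x : ℝ) :
    ∑' n : ℕ, x ^ n / (Nat.factorial n) = Real.exp x := by
  rw [Real.exp_eq_exp_ℝ, NormedSpace.exp_eq_tsum_div]

lemma inner_summable' {ξ q : ℝ} (hq0 : 0 < q) (hq1 : q < 1) (i : ℕ) :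
    Summable (fun j : ℕ => Real.exp ξ ^ min i j * (q ^ j * (1 - q))) := by
  rw [← summable_nat_add_iff i]
  have : (fun j : ℕ => Real.exp ξ ^ min i (j + i) * (q ^ (j + i) * (1 - q)))
      = fun j : ℕ => (Real.exp ξ ^ i * q ^ i * (1 - q)) * q ^ j := by
    funext j
    rw [min_eq_left (Nat.le_add_left i j), pow_add]
    ring
  rw [this]
  exact (summable_geometric_of_lt_one hq0.le hq1).mul_left _

lemma inner_sum' {ξ q : ℝ} (hq0 : 0 < q) (hq1 : q < 1)
    (hr : q * Real.exp ξ < 1) (i : ℕ) :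
    ∑' j : ℕ, Real.exp ξ ^ min i j * (q ^ j * (1 - q)) =
      (1 - q) * (1 - (q * Real.exp ξ) ^ i) / (1 - q * Real.exp ξ)
        + (q * Real.exp ξ) ^ i := by
  have hsum := inner_summable' hq0 hq1 (ξ := ξ) i
  rw [← Summable.sum_add_tsum_nat_add i hsum]
  have hhead : ∑ j ∈ Finset.range i, Real.exp ξ ^ min i j * (q ^ j * (1 - q))
      = (1 - q) * (1 - (q * Real.exp ξ) ^ i) / (1 - q * Real.exp ξ) := by
    have h1 : ∀ j ∈ Finset.range i,
        Real.exp ξ ^ min i j * (q ^ j * (1 - q))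
          = (1 - q) * (q * Real.exp ξ) ^ j := by
      intro j hj
      rw [Finset.mem_range] at hj
      rw [min_eq_right hj.le, mul_pow]
      ring
    rw [Finset.sum_congr rfl h1, ← Finset.mul_sum]
    rcases eq_or_ne (q * Real.exp ξ) 1 with h | h
    · exfalso; rw [h] at hr; exact lt_irrefl 1 hr
    · rw [geom_sum_eq h, mul_div_assoc]
      congr 1
      rw [← neg_div_neg_eq, neg_sub, neg_sub]
  have htail : ∑' j : ℕ, Real.exp ξ ^ min i (j + i) * (q ^ (j + i) * (1 - q))
      = (q * Real.exp ξ) ^ i := by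
    have : (fun j : ℕ => Real.exp ξ ^ min i (j + i) * (q ^ (j + i) * (1 - q)))
        = fun j : ℕ => (Real.exp ξ ^ i * q ^ i * (1 - q)) * q ^ j := by
      funext j
      rw [min_eq_left (Nat.le_add_left i j), pow_add]
      ring
    rw [this, tsum_mul_left, tsum_geometric_of_lt_one hq0.le hq1, mul_pow]
    have h2 : 1 - q ≠ 0 := by intro h0; nlinarith
    field_simp
  rw [hhead, htail]

/-- Moment generating function of `B = min(Z, G)` for independent
`Z ~ Poisson(μ)` and `G ~ Geom(1-q)`. -/
theorem mgf_min_poisson_geometric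
    {Ω : Type*} [MeasurableSpace Ω] (P : Measure Ω) [IsProbabilityMeasure P]
    (Z G : Ω → ℕ) (hZmeas : Measurable Z) (hGmeas : Measurable G)
    (m q : ℝ) (hm : 0 < m) (hq0 : 0 < q) (hq1 : q < 1)
    (hZ : ∀ k : ℕ, P {ω | Z ω = k} =
      ENNReal.ofReal (Real.exp (-m) * m ^ k / (Nat.factorial k)))
    (hG : ∀ k : ℕ, P {ω | G ω = k} = ENNReal.ofReal (q ^ k * (1 - q)))
    (hindep : IndepFun Z G P) :
    ∀ ξ : ℝ, q * Real.exp ξ < 1 →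
      mgf (fun ω => (min (Z ω) (G ω) : ℝ)) P ξ =
        Real.exp (-(1 - q) * m) * Real.exp (-(1 - Real.exp ξ) * (q * m)) +
          (1 - q) / (1 - q * Real.exp ξ) *
            (1 - Real.exp (-(1 - q * Real.exp ξ) * m)) := by
  intro ξ hr
  set r : ℝ := q * Real.exp ξ with hrdef
  have hr0 : 0 < r := mul_pos hq0 (Real.exp_pos ξ)
  have hr1 : (0:ℝ) < 1 - r := by linarith
  have hq1' : (0:ℝ) < 1 - q := by linarith
  -- probability mass functions
  set pZ : ℕ → ℝ := fun k => Real.exp (-m) * m ^ k / (Nat.factorial k) with hpZ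
  set pG : ℕ → ℝ := fun k => q ^ k * (1 - q) with hpG
  have hpZnn : ∀ k, 0 ≤ pZ k := by
    intro k
    have := Real.exp_pos (-m)
    positivity
  have hpGnn : ∀ k, 0 ≤ pG k := by
    intro k
    have : (0:ℝ) ≤ q ^ k := pow_nonneg hq0.le k
    positivity
  -- the function on ℕ × ℕ
  set g : ℕ × ℕ → ℝ := fun p => Real.exp (ξ * ((min p.1 p.2 : ℕ) : ℝ)) with hg
  have hgnn : ∀ p, 0 ≤ g p := fun p => (Real.exp_pos _).le
  have hgpow : ∀ p : ℕ × ℕ, g p = Real.exp ξ ^ min p.1 p.2 := by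
    intro p
    rw [hg]
    simp only []
    rw [mul_comm, Real.exp_nat_mul]
  -- joint law
  have hN : Measurable fun ω => (Z ω, G ω) := hZmeas.prodMk hGmeas
  have hmap : ∀ p : ℕ × ℕ,
      (P.map fun ω => (Z ω, G ω)) {p} = ENNReal.ofReal (pZ p.1 * pG p.2) := by
    rintro ⟨i, j⟩
    rw [Measure.map_apply hN (measurableSet_singleton _)]
    have hpre : ((fun ω => (Z ω, G ω)) ⁻¹' {(i, j)})
        = Z ⁻¹' {i} ∩ G ⁻¹' {j} := by
      ext ω
      simp [Prod.ext_iff]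
    rw [hpre, hindep.measure_inter_preimage_eq_mul _ _
      (measurableSet_singleton i) (measurableSet_singleton j)]
    have hZi : Z ⁻¹' {i} = {ω | Z ω = i} := rfl
    have hGj : G ⁻¹' {j} = {ω | G ω = j} := rfl
    rw [hZi, hGj, hZ i, hG j, ← ENNReal.ofReal_mul (hpZnn i)]
  -- the inner sums (over the geometric variable)
  have hinner : ∀ i : ℕ, ∑' j : ℕ, g (i, j) * (pZ i * pG j)
      = pZ i * ((1 - q) * (1 - r ^ i) / (1 - r) + r ^ i) := by
    intro i
    have : (fun j : ℕ => g (i, j) * (pZ i * pG j))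
        = fun j : ℕ => pZ i * (Real.exp ξ ^ min i j * (q ^ j * (1 - q))) := by
      funext j
      rw [hgpow (i, j)]
      ring
    rw [this, tsum_mul_left, inner_sum' hq0 hq1 hr]
  -- summability of inner series
  have hinnersummable : ∀ i : ℕ, Summable (fun j : ℕ => g (i, j) * (pZ i * pG j)) := by
    intro i
    have : (fun j : ℕ => g (i, j) * (pZ i * pG j))
        = fun j : ℕ => pZ i * (Real.exp ξ ^ min i j * (q ^ j * (1 - q))) := by
      funext j
      rw [hgpow (i, j)]
      ring
    rw [this]
    exact (inner_summable' hq0 hq1 i).mul_left _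
  -- the outer series
  set A : ℕ → ℝ := fun i => pZ i * ((1 - q) * (1 - r ^ i) / (1 - r) + r ^ i) with hA
  have hAnn : ∀ i, 0 ≤ A i := by
    intro i
    apply mul_nonneg (hpZnn i)
    have h1 : r ^ i ≤ 1 := pow_le_one₀ hr0.le (by linarith)
    have h2 : (0:ℝ) ≤ r ^ i := pow_nonneg hr0.le i
    have h3 : (0:ℝ) ≤ (1 - q) * (1 - r ^ i) / (1 - r) := by
      apply div_nonneg _ hr1.le
      apply mul_nonneg hq1'.le
      linarith
    linarith
  have hAsplit : A = fun i : ℕ =>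
      (Real.exp (-m) * ((1 - q) / (1 - r))) * (m ^ i / (Nat.factorial i))
        + (Real.exp (-m) * (1 - (1 - q) / (1 - r))) * ((m * r) ^ i / (Nat.factorial i)) := by
    funext i
    rw [hA, hpZ]
    simp only [mul_pow]
    have hfac : (0:ℝ) < (Nat.factorial i : ℝ) := by
      exact_mod_cast Nat.factorial_pos i
    field_simp
    ring
  have hs1 : Summable (fun i : ℕ => m ^ i / (Nat.factorial i : ℝ)) :=
    Real.summable_pow_div_factorial m
  have hs2 : Summable (fun i : ℕ => (m * r) ^ i / (Nat.factorial i : ℝ)) :=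
    Real.summable_pow_div_factorial (m * r)
  have hAsummable : Summable A := by
    rw [hAsplit]
    exact (hs1.mul_left _).add (hs2.mul_left _)
  have hAtsum : ∑' i, A i =
      Real.exp (-(1 - q) * m) * Real.exp (-(1 - Real.exp ξ) * (q * m)) +
        (1 - q) / (1 - q * Real.exp ξ) *
          (1 - Real.exp (-(1 - q * Real.exp ξ) * m)) := by
    rw [hAsplit, Summable.tsum_add (hs1.mul_left _) (hs2.mul_left _), tsum_mul_left,
      tsum_mul_left, tsum_pow_div_factorial', tsum_pow_div_factorial']
    have e1 : Real.exp (-(1 - q) * m) * Real.exp (-(1 - Real.exp ξ) * (q * m))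
        = Real.exp (m * r - m) := by
      rw [← Real.exp_add]; congr 1; rw [hrdef]; ring
    have e2 : Real.exp (-(1 - q * Real.exp ξ) * m) = Real.exp (m * r - m) := by
      congr 1; rw [hrdef]; ring
    have e3 : Real.exp (-m) * Real.exp m = 1 := by
      rw [← Real.exp_add]; simp
    have e4 : Real.exp (-m) * Real.exp (m * r) = Real.exp (m * r - m) := by
      rw [← Real.exp_add]; congr 1; ring
    rw [e1, e2, ← hrdef]
    have expand1 : Real.exp (-m) * ((1 - q) / (1 - r)) * Real.exp m
        = (1 - q) / (1 - r) := by
      rw [mul_right_comm, e3, one_mul]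
    have expand2 : Real.exp (-m) * (1 - (1 - q) / (1 - r)) * Real.exp (m * r)
        = Real.exp (m * r - m) * (1 - (1 - q) / (1 - r)) := by
      rw [mul_right_comm, e4]
    rw [expand1, expand2]
    ring
  -- RHS is nonnegative
  have hRHSnn : 0 ≤
      Real.exp (-(1 - q) * m) * Real.exp (-(1 - Real.exp ξ) * (q * m)) +
        (1 - q) / (1 - q * Real.exp ξ) *
          (1 - Real.exp (-(1 - q * Real.exp ξ) * m)) := by
    have h1 : (0:ℝ) ≤ Real.exp (-(1 - q) * m) * Real.exp (-(1 - Real.exp ξ) * (q * m)) :=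
      (mul_pos (Real.exp_pos _) (Real.exp_pos _)).le
    have h2 : Real.exp (-(1 - q * Real.exp ξ) * m) ≤ 1 := by
      rw [Real.exp_le_one_iff]
      nlinarith
    have h3 : (0:ℝ) ≤ (1 - q) / (1 - q * Real.exp ξ) := by
      apply div_nonneg hq1'.le hr1.le
    nlinarith
  -- now compute the mgf
  have hmeasg : Measurable fun ω => g (Z ω, G ω) :=
    (measurable_of_countable g).comp hN
  have hmgf : mgf (fun ω => (min (Z ω) (G ω) : ℝ)) P ξ
      = ∫ ω, g (Z ω, G ω) ∂P := by
    unfold mgf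
    congr 1
    funext ω
    rw [hg]
    simp only [Nat.cast_min]
  rw [hmgf, integral_eq_lintegral_of_nonneg_ae
    (Filter.Eventually.of_forall fun ω => hgnn _) hmeasg.aestronglyMeasurable]
  have hlint : ∫⁻ ω, ENNReal.ofReal (g (Z ω, G ω)) ∂P
      = ∑' p : ℕ × ℕ, ENNReal.ofReal (g p * (pZ p.1 * pG p.2)) := by
    have h1 : ∫⁻ ω, ENNReal.ofReal (g (Z ω, G ω)) ∂P
        = ∫⁻ p, ENNReal.ofReal (g p) ∂(P.map fun ω => (Z ω, G ω)) :=
      (lintegral_map (ENNReal.measurable_ofReal.comp (measurable_of_countable g)) hN).symm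
    rw [h1, lintegral_countable' (fun p => ENNReal.ofReal (g p))]
    congr 1
    funext p
    rw [hmap p, ← ENNReal.ofReal_mul (hgnn p)]
  rw [hlint]
  have hprod : ∑' p : ℕ × ℕ, ENNReal.ofReal (g p * (pZ p.1 * pG p.2))
      = ∑' i : ℕ, ∑' j : ℕ, ENNReal.ofReal (g (i, j) * (pZ i * pG j)) :=
    ENNReal.tsum_prod'
  rw [hprod]
  have hinnerEN : ∀ i : ℕ, ∑' j : ℕ, ENNReal.ofReal (g (i, j) * (pZ i * pG j))
      = ENNReal.ofReal (A i) := by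
    intro i
    rw [← ENNReal.ofReal_tsum_of_nonneg
      (fun j => mul_nonneg (hgnn _) (mul_nonneg (hpZnn i) (hpGnn j)))
      (hinnersummable i), hinner i]
  simp only [hinnerEN]
  rw [← ENNReal.ofReal_tsum_of_nonneg hAnn hAsummable, hAtsum,
    ENNReal.toReal_ofReal hRHSnn]
end

section
/- Let Y be a random variable on ℕ with moment generating function G_Y(ξ) = G^B(log((1−p)/(1−p e^ξ))) for some function G^B, where 0 < p < 1 (i.e., Y is a mixed negative binomial: Y | B is NegBin(B, 1−p)). Let Y' be the binomial thinning of Y with retention probability p_d ∈ (0,1), i.e., Y' | Y ~ Bin(Y, p_d). Then the moment generating function of Y' equals G^B(log((1−p')/(1−p' e^ξ))) with p' = p·p_d / (1 − p + p·p_d). In particular, the parametric family is invariant under thinning. -/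
/-! Thinning a variable `Y` with retention probability `p_d` turns its probability generating
function `s ↦ E[s^Y]` into `s ↦ E[(1 - p_d + p_d s)^Y]`, so `mgf Y' ξ = mgf Y ξ'` with
`e^ξ' = 1 - p_d + p_d e^ξ`. Substituting into the mixed negative binomial mgf, the argument
`(1 - p)/(1 - p e^ξ')` becomes, after dividing through by `1 - p + p p_d`, exactly
`(1 - p')/(1 - p' e^ξ)`. -/

open MeasureTheory ProbabilityTheory
open scoped ENNReal

section Thinning

variable {Ω : Type*} [MeasurableSpace Ω] (P : Measure Ω)

lemma lintegral_comp_eq_tsum {α : Type*} [MeasurableSpace α] [Countable α]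
    [MeasurableSingletonClass α] {f : Ω → α} (hf : Measurable f) (g : α → ℝ≥0∞) :
    ∫⁻ ω, g (f ω) ∂P = ∑' a, g a * P (f ⁻¹' {a}) := by
  rw [← lintegral_map (measurable_of_countable g) hf, lintegral_countable']
  simp_rw [Measure.map_apply hf (measurableSet_singleton _)]

lemma tsum_ofReal_pow_mul_binomial {pd c : ℝ} (hpd0 : 0 ≤ pd) (hpd1 : pd ≤ 1) (hc : 0 ≤ c)
    (n : ℕ) :
    ∑' k : ℕ, ENNReal.ofReal (c ^ k) *
        ENNReal.ofReal ((n.choose k : ℝ) * pd ^ k * (1 - pd) ^ (n - k)) =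
      ENNReal.ofReal ((1 - pd + pd * c) ^ n) := by
  have hterm : ∀ k, 0 ≤ c ^ k * ((n.choose k : ℝ) * pd ^ k * (1 - pd) ^ (n - k)) := by
    have := sub_nonneg.2 hpd1
    intro k
    positivity
  simp_rw [← ENNReal.ofReal_mul (pow_nonneg hc _)]
  rw [tsum_eq_sum (s := Finset.range (n + 1)), ← ENNReal.ofReal_sum_of_nonneg fun k _ => hterm k,
    show 1 - pd + pd * c = pd * c + (1 - pd) by ring, add_pow]
  · exact congrArg _ (Finset.sum_congr rfl fun k _ => by ring)
  · intro k hk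
    rw [Nat.choose_eq_zero_of_lt (by simpa using hk)]
    simp

lemma mgf_natCast_eq_toReal_lintegral {f : Ω → ℕ} (hf : Measurable f) (t : ℝ) :
    mgf (fun ω => (f ω : ℝ)) P t = (∫⁻ ω, ENNReal.ofReal (Real.exp t ^ f ω) ∂P).toReal := by
  simp_rw [← Real.exp_nat_mul, mul_comm _ t]
  exact integral_eq_lintegral_of_nonneg_ae (ae_of_all _ fun ω => (Real.exp_pos _).le)
    (Real.measurable_exp.comp ((measurable_from_nat.comp hf).const_mul t)).aestronglyMeasurable

lemma one_sub_add_mul_pos {pd c : ℝ} (hpd0 : 0 ≤ pd) (hpd1 : pd ≤ 1) (hc : 0 < c) :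
    0 < 1 - pd + pd * c := by
  rcases hpd1.lt_or_eq with hlt | rfl
  · linarith [mul_nonneg hpd0 hc.le]
  · linarith

variable {Y Y' : Ω → ℕ} (hY : Measurable Y) (hY' : Measurable Y') {pd : ℝ}
  (hpd0 : 0 ≤ pd) (hpd1 : pd ≤ 1)
  (hthin : ∀ n k : ℕ, P {ω | Y' ω = k ∧ Y ω = n} =
    P {ω | Y ω = n} * ENNReal.ofReal ((n.choose k : ℝ) * pd ^ k * (1 - pd) ^ (n - k)))
include hY hY' hpd0 hpd1 hthin

lemma lintegral_pow_thinning {c : ℝ} (hc : 0 ≤ c) :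
    ∫⁻ ω, ENNReal.ofReal (c ^ Y' ω) ∂P = ∫⁻ ω, ENNReal.ofReal ((1 - pd + pd * c) ^ Y ω) ∂P := by
  have hjoint : ∀ n k : ℕ, (fun ω => (Y ω, Y' ω)) ⁻¹' {(n, k)} = {ω | Y' ω = k ∧ Y ω = n} := by
    intro n k
    ext ω
    simp [and_comm]
  calc ∫⁻ ω, ENNReal.ofReal (c ^ Y' ω) ∂P
      = ∑' nk : ℕ × ℕ, ENNReal.ofReal (c ^ nk.2) * P ((fun ω => (Y ω, Y' ω)) ⁻¹' {nk}) :=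
        lintegral_comp_eq_tsum P (hY.prodMk hY') fun nk => ENNReal.ofReal (c ^ nk.2)
    _ = ∑' n : ℕ, (∑' k : ℕ, ENNReal.ofReal (c ^ k) *
          ENNReal.ofReal ((n.choose k : ℝ) * pd ^ k * (1 - pd) ^ (n - k))) * P (Y ⁻¹' {n}) := by
        rw [ENNReal.tsum_prod']
        refine tsum_congr fun n => ?_
        rw [← ENNReal.tsum_mul_right]
        refine tsum_congr fun k => ?_
        rw [hjoint, hthin]
        exact (mul_left_comm _ _ _).trans (mul_comm _ _)
    _ = ∑' n : ℕ, ENNReal.ofReal ((1 - pd + pd * c) ^ n) * P (Y ⁻¹' {n}) := by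
        simp_rw [tsum_ofReal_pow_mul_binomial hpd0 hpd1 hc]
    _ = ∫⁻ ω, ENNReal.ofReal ((1 - pd + pd * c) ^ Y ω) ∂P :=
        (lintegral_comp_eq_tsum P hY _).symm

lemma mgf_thinning (ξ : ℝ) :
    mgf (fun ω => (Y' ω : ℝ)) P ξ =
      mgf (fun ω => (Y ω : ℝ)) P (Real.log (1 - pd + pd * Real.exp ξ)) := by
  rw [mgf_natCast_eq_toReal_lintegral P hY', mgf_natCast_eq_toReal_lintegral P hY,
    Real.exp_log (one_sub_add_mul_pos hpd0 hpd1 (Real.exp_pos ξ)),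
    lintegral_pow_thinning P hY hY' hpd0 hpd1 hthin (Real.exp_pos ξ).le]

end Thinning

lemma thinnedNegBin_mul_lt_one_iff {p pd c : ℝ} (hq : 0 < 1 - p + p * pd) :
    p * pd / (1 - p + p * pd) * c < 1 ↔ p * (1 - pd + pd * c) < 1 := by
  rw [div_mul_eq_mul_div, div_lt_one hq]
  constructor <;> intro h <;> linarith

lemma thinnedNegBin_ratio {p pd c : ℝ} (hq : 1 - p + p * pd ≠ 0) :
    (1 - p * pd / (1 - p + p * pd)) / (1 - p * pd / (1 - p + p * pd) * c) =
      (1 - p) / (1 - p * (1 - pd + pd * c)) := by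
  field_simp
  ring

theorem thinning_invariance_mixed_negbin_general
    {Ω : Type*} [MeasurableSpace Ω] (P : Measure Ω)
    (Y Y' : Ω → ℕ) (hYmeas : Measurable Y) (hY'meas : Measurable Y')
    (GB : ℝ → ℝ) (p pd : ℝ) (hp1 : p < 1)
    (hpd0 : 0 < pd) (hpd1 : pd < 1)
    (hmgfY : ∀ ξ : ℝ, p * Real.exp ξ < 1 →
      mgf (fun ω => (Y ω : ℝ)) P ξ =
        GB (Real.log ((1 - p) / (1 - p * Real.exp ξ))))
    (hthin : ∀ n k : ℕ, P {ω | Y' ω = k ∧ Y ω = n} =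
      P {ω | Y ω = n} *
        ENNReal.ofReal ((n.choose k : ℝ) * pd ^ k * (1 - pd) ^ (n - k))) :
    ∀ ξ : ℝ, (p * pd / (1 - p + p * pd)) * Real.exp ξ < 1 →
      mgf (fun ω => (Y' ω : ℝ)) P ξ =
        GB (Real.log ((1 - p * pd / (1 - p + p * pd)) /
          (1 - (p * pd / (1 - p + p * pd)) * Real.exp ξ))) := by
  intro ξ hξ
  -- `1 - p + p pd = (1 - p)(1 - pd) + pd`
  have hq : 0 < 1 - p + p * pd := by linarith [mul_pos (sub_pos.2 hp1) (sub_pos.2 hpd1)]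
  have hpos := one_sub_add_mul_pos hpd0.le hpd1.le (Real.exp_pos ξ)
  have hlt := (thinnedNegBin_mul_lt_one_iff hq).1 hξ
  rw [mgf_thinning P hYmeas hY'meas hpd0.le hpd1.le hthin,
    hmgfY _ (by rwa [Real.exp_log hpos]), Real.exp_log hpos, thinnedNegBin_ratio hq.ne']

/-- Invariance of the mixed negative binomial family under binomial thinning:
if `Y` has mgf `ξ ↦ G^B(log((1-p)/(1-p e^ξ)))` and `Y' | Y ~ Bin(Y, p_d)`,
then `Y'` has mgf `ξ ↦ G^B(log((1-p')/(1-p' e^ξ)))` with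
`p' = p p_d / (1 - p + p p_d)`. -/
theorem thinning_invariance_mixed_negbin
    {Ω : Type*} [MeasurableSpace Ω] (P : Measure Ω) [IsProbabilityMeasure P]
    (Y Y' : Ω → ℕ) (hYmeas : Measurable Y) (hY'meas : Measurable Y')
    (GB : ℝ → ℝ) (p pd : ℝ) (hp0 : 0 < p) (hp1 : p < 1)
    (hpd0 : 0 < pd) (hpd1 : pd < 1)
    (hmgfY : ∀ ξ : ℝ, p * Real.exp ξ < 1 →
      mgf (fun ω => (Y ω : ℝ)) P ξ =
        GB (Real.log ((1 - p) / (1 - p * Real.exp ξ))))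
    (hthin : ∀ n k : ℕ, P {ω | Y' ω = k ∧ Y ω = n} =
      P {ω | Y ω = n} *
        ENNReal.ofReal ((n.choose k : ℝ) * pd ^ k * (1 - pd) ^ (n - k))) :
    ∀ ξ : ℝ, (p * pd / (1 - p + p * pd)) * Real.exp ξ < 1 →
      mgf (fun ω => (Y' ω : ℝ)) P ξ =
        GB (Real.log ((1 - p * pd / (1 - p + p * pd)) /
          (1 - (p * pd / (1 - p + p * pd)) * Real.exp ξ))) :=
  thinning_invariance_mixed_negbin_general P Y Y' hYmeas hY'meas GB p pd hp1 hpd0 hpd1 hmgfY hthin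
end

section
/- Let Y be a nonnegative integer-valued random variable with finite second moment, conditioned on an event A, and let Y' be its binomial thinning with retention probability p_d ∈ (0,1]. Define θ₁ = E[Y | A], θ₃ = Var[Y | A]/θ₁² − 1/θ₁, and analogously θ₁', θ₃' for Y'. Then θ₁' = p_d θ₁ and θ₃' = θ₃; i.e., binomial thinning scales the mean by p_d and leaves the excess relative variance with respect to a Poisson distribution unchanged. -/
/-!
With `m = E[Y]` and `F = E[Y (Y - 1)]` one has `Var Y = F + m - m²`, so
`Var Y / m² - 1 / m = F / m² - 1`: the excess relative variance only sees the ratio of the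
second factorial moment to the squared first one. The `r`-th factorial moment of `Bin(n, p)` is
`n (n - 1) ⋯ (n - r + 1) pʳ`, so conditioning on `Y` shows that thinning multiplies the `r`-th
factorial moment by `pʳ`; hence `m` scales by `p`, `F` by `p²`, and the ratio is unchanged.
Square-integrability of `Y'` comes for free, since `Y' ≤ Y` almost surely.
-/
open Finset MeasureTheory ProbabilityTheory
open scoped ENNReal

theorem sum_descFactorial_mul_choose_mul_pow (p q : ℝ) (hpq : p + q = 1) (r n : ℕ) :
    ∑ k ∈ range (n + 1), (k.descFactorial r : ℝ) * (n.choose k * p ^ k * q ^ (n - k)) =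
      n.descFactorial r * p ^ r := by
  induction r generalizing n with
  | zero =>
    simp only [Nat.descFactorial_zero, Nat.cast_one, one_mul, pow_zero, mul_one]
    have h := add_pow p q n
    rw [hpq, one_pow] at h
    rw [h]
    exact sum_congr rfl fun k _ => by ring
  | succ r ih =>
    cases n with
    | zero => simp
    | succ n =>
      rw [sum_range_succ', Nat.zero_descFactorial_succ, Nat.cast_zero, zero_mul, add_zero]
      calc ∑ k ∈ range (n + 1), ((k + 1).descFactorial (r + 1) : ℝ) *
              ((n + 1).choose (k + 1) * p ^ (k + 1) * q ^ (n + 1 - (k + 1)))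
          = ∑ k ∈ range (n + 1), ((n + 1) * p) *
              ((k.descFactorial r : ℝ) * (n.choose k * p ^ k * q ^ (n - k))) := by
            refine sum_congr rfl fun k _ => ?_
            have h := congrArg (Nat.cast : ℕ → ℝ) (Nat.add_one_mul_choose_eq n k)
            push_cast at h
            rw [Nat.succ_descFactorial_succ, Nat.add_sub_add_right]
            push_cast
            linear_combination (k.descFactorial r * p ^ (k + 1) * q ^ (n - k) : ℝ) * h.symm
        _ = _ := by
            rw [← mul_sum, ih, Nat.succ_descFactorial_succ]
            push_cast
            ring

section Thinning

variable {Ω : Type*} [MeasurableSpace Ω] {μ : Measure Ω}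

theorem lintegral_comp_nat {X : Ω → ℕ} (hX : Measurable X) (f : ℕ → ℝ≥0∞) :
    ∫⁻ ω, f (X ω) ∂μ = ∑' n, μ {ω | X ω = n} * f n := by
  rw [← lintegral_map (measurable_of_countable f) hX, lintegral_countable']
  refine tsum_congr fun n => ?_
  rw [Measure.map_apply hX (measurableSet_singleton n), mul_comm]
  rfl

theorem measure_eq_tsum_measure_and {X Y : Ω → ℕ} (hX : Measurable X) (hY : Measurable Y)
    (k : ℕ) : μ {ω | X ω = k} = ∑' n, μ {ω | X ω = k ∧ Y ω = n} := by
  have hunion : {ω | X ω = k} = ⋃ n, {ω | X ω = k ∧ Y ω = n} := by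
    ext ω; simp
  rw [hunion, measure_iUnion]
  · intro m n hmn
    refine Set.disjoint_left.2 fun ω hm hn => hmn ?_
    exact hm.2.symm.trans hn.2
  · exact fun n => (hX (measurableSet_singleton k)).inter (hY (measurableSet_singleton n))

theorem integral_natCast_eq_toReal_lintegral {Z : Ω → ℕ} (hZ : Measurable Z) :
    ∫ ω, (Z ω : ℝ) ∂μ = (∫⁻ ω, (Z ω : ℝ≥0∞) ∂μ).toReal := by
  simpa using integral_toReal (f := fun ω => (Z ω : ℝ≥0∞))
    (measurable_from_nat.comp hZ).aemeasurable (.of_forall fun ω => ENNReal.natCast_lt_top (Z ω))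

def IsBinomialThinning (μ : Measure Ω) (Y Y' : Ω → ℕ) (p : ℝ) : Prop :=
  ∀ n k : ℕ, μ {ω | Y' ω = k ∧ Y ω = n} =
    μ {ω | Y ω = n} * ENNReal.ofReal (n.choose k * p ^ k * (1 - p) ^ (n - k))

namespace IsBinomialThinning

variable {Y Y' : Ω → ℕ} {p : ℝ}

theorem ae_le (h : IsBinomialThinning μ Y Y' p) : ∀ᵐ ω ∂μ, Y' ω ≤ Y ω := by
  have hlt : {ω | ¬Y' ω ≤ Y ω} = ⋃ n, ⋃ k, ⋃ (_ : n < k), {ω | Y' ω = k ∧ Y ω = n} := by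
    ext ω; simp [and_comm]
  rw [ae_iff, hlt]
  refine measure_iUnion_null fun n => measure_iUnion_null fun k =>
    measure_iUnion_null fun hnk => ?_
  rw [h n k, Nat.choose_eq_zero_of_lt hnk]
  simp

theorem lintegral_comp (h : IsBinomialThinning μ Y Y' p) (hY : Measurable Y)
    (hY' : Measurable Y') (f : ℕ → ℝ≥0∞) :
    ∫⁻ ω, f (Y' ω) ∂μ = ∑' n, μ {ω | Y ω = n} *
      ∑ k ∈ range (n + 1), ENNReal.ofReal (n.choose k * p ^ k * (1 - p) ^ (n - k)) * f k := by
  calc ∫⁻ ω, f (Y' ω) ∂μ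
      = ∑' k, ∑' n, μ {ω | Y ω = n} *
          (ENNReal.ofReal (n.choose k * p ^ k * (1 - p) ^ (n - k)) * f k) := by
        rw [lintegral_comp_nat hY']
        refine tsum_congr fun k => ?_
        rw [measure_eq_tsum_measure_and hY' hY k, ← ENNReal.tsum_mul_right]
        simp only [h _ k, mul_assoc]
    _ = _ := by
        rw [ENNReal.tsum_comm]
        refine tsum_congr fun n => ?_
        rw [ENNReal.tsum_mul_left, tsum_eq_sum fun k hk => ?_]
        rw [Nat.choose_eq_zero_of_lt (by simpa [Nat.lt_succ_iff] using hk)]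
        simp

theorem lintegral_descFactorial (h : IsBinomialThinning μ Y Y' p) (hY : Measurable Y)
    (hY' : Measurable Y') (hp0 : 0 ≤ p) (hp1 : p ≤ 1) (r : ℕ) :
    ∫⁻ ω, ((Y' ω).descFactorial r : ℝ≥0∞) ∂μ =
      ENNReal.ofReal p ^ r * ∫⁻ ω, ((Y ω).descFactorial r : ℝ≥0∞) ∂μ := by
  rw [h.lintegral_comp hY hY' fun k => (k.descFactorial r : ℝ≥0∞),
    lintegral_comp_nat hY fun n => (n.descFactorial r : ℝ≥0∞), ← ENNReal.tsum_mul_left]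
  refine tsum_congr fun n => ?_
  have hbinom : ∑ k ∈ range (n + 1), ENNReal.ofReal (n.choose k * p ^ k * (1 - p) ^ (n - k)) *
      (k.descFactorial r : ℝ≥0∞) = n.descFactorial r * ENNReal.ofReal p ^ r := by
    have hq : 0 ≤ 1 - p := by linarith
    rw [← ENNReal.ofReal_natCast, ← ENNReal.ofReal_pow hp0,
      ← ENNReal.ofReal_mul (by positivity),
      ← sum_descFactorial_mul_choose_mul_pow p (1 - p) (by ring), ENNReal.ofReal_sum_of_nonneg fun k _ => by positivity]
    refine sum_congr rfl fun k _ => ?_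
    rw [ENNReal.ofReal_mul (Nat.cast_nonneg _), ENNReal.ofReal_natCast, mul_comm]
  rw [hbinom]
  ring

theorem integral_descFactorial (h : IsBinomialThinning μ Y Y' p) (hY : Measurable Y)
    (hY' : Measurable Y') (hp0 : 0 ≤ p) (hp1 : p ≤ 1) (r : ℕ) :
    ∫ ω, ((Y' ω).descFactorial r : ℝ) ∂μ = p ^ r * ∫ ω, ((Y ω).descFactorial r : ℝ) ∂μ := by
  have hdesc : Measurable fun n : ℕ => n.descFactorial r := measurable_from_nat
  rw [integral_natCast_eq_toReal_lintegral (Z := fun ω => (Y' ω).descFactorial r)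
      (hdesc.comp hY'),
    integral_natCast_eq_toReal_lintegral (Z := fun ω => (Y ω).descFactorial r) (hdesc.comp hY),
    h.lintegral_descFactorial hY hY' hp0 hp1, ENNReal.toReal_mul,
    ENNReal.toReal_pow, ENNReal.toReal_ofReal hp0]

end IsBinomialThinning

end Thinning

theorem variance_eq_integral_mul_sub_one_add_sub {Ω : Type*} [MeasurableSpace Ω]
    {μ : Measure Ω} [IsProbabilityMeasure μ] {X : Ω → ℝ} (hX : MemLp X 2 μ) :
    variance X μ = ∫ ω, X ω * (X ω - 1) ∂μ + ∫ ω, X ω ∂μ - (∫ ω, X ω ∂μ) ^ 2 := by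
  have hfact : ∫ ω, X ω * (X ω - 1) ∂μ = ∫ ω, X ω ^ 2 ∂μ - ∫ ω, X ω ∂μ := by
    simp_rw [mul_sub_one, ← sq]
    exact integral_sub hX.integrable_sq (hX.integrable one_le_two)
  rw [variance_eq_sub hX, hfact]
  simp only [Pi.pow_apply]
  ring

theorem thinning_moment_parameters_general
    {Ω : Type*} [MeasurableSpace Ω] (P : Measure Ω) [IsProbabilityMeasure P]
    (Y Y' : Ω → ℕ) (hYmeas : Measurable Y) (hY'meas : Measurable Y')
    (A : Set Ω) (hApos : P A ≠ 0)
    (pd : ℝ) (hpd0 : 0 < pd) (hpd1 : pd ≤ 1)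
    (hY2 : Integrable (fun ω => ((Y ω : ℝ)) ^ 2) (P[|A]))
    (hthin : ∀ n k : ℕ, (P[|A]) {ω | Y' ω = k ∧ Y ω = n} =
      (P[|A]) {ω | Y ω = n} *
        ENNReal.ofReal ((n.choose k : ℝ) * pd ^ k * (1 - pd) ^ (n - k))) :
    (∫ ω, (Y' ω : ℝ) ∂(P[|A])) = pd * ∫ ω, (Y ω : ℝ) ∂(P[|A]) ∧
    variance (fun ω => (Y' ω : ℝ)) (P[|A]) / (∫ ω, (Y' ω : ℝ) ∂(P[|A])) ^ 2
        - 1 / (∫ ω, (Y' ω : ℝ) ∂(P[|A]))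
      = variance (fun ω => (Y ω : ℝ)) (P[|A]) / (∫ ω, (Y ω : ℝ) ∂(P[|A])) ^ 2
        - 1 / (∫ ω, (Y ω : ℝ) ∂(P[|A])) := by
  have : IsProbabilityMeasure (P[|A]) := cond_isProbabilityMeasure hApos
  have hthinning : IsBinomialThinning (P[|A]) Y Y' pd := hthin
  have hY : MemLp (fun ω => (Y ω : ℝ)) 2 (P[|A]) :=
    (memLp_two_iff_integrable_sq (measurable_from_nat.comp hYmeas).aestronglyMeasurable).2 hY2
  have hY' : MemLp (fun ω => (Y' ω : ℝ)) 2 (P[|A]) :=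
    hY.of_le (measurable_from_nat.comp hY'meas).aestronglyMeasurable
      (hthinning.ae_le.mono fun ω hω => by simpa using hω)
  have hmean := hthinning.integral_descFactorial hYmeas hY'meas hpd0.le hpd1 1
  have hfact := hthinning.integral_descFactorial hYmeas hY'meas hpd0.le hpd1 2
  simp only [Nat.descFactorial_one, pow_one, Nat.cast_descFactorial_two] at hmean hfact
  refine ⟨hmean, ?_⟩
  rw [variance_eq_integral_mul_sub_one_add_sub hY, variance_eq_integral_mul_sub_one_add_sub hY',
    hmean, hfact]
  rcases eq_or_ne (∫ ω, (Y ω : ℝ) ∂(P[|A])) 0 with h0 | h0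
  · simp [h0]
  · field_simp
    ring

/-- Binomial thinning with retention probability `p_d` scales the conditional
mean by `p_d` and leaves the excess relative variance w.r.t. Poisson
(`θ₃ = Var/θ₁² - 1/θ₁`) unchanged. -/
theorem thinning_moment_parameters
    {Ω : Type*} [MeasurableSpace Ω] (P : Measure Ω) [IsProbabilityMeasure P]
    (Y Y' : Ω → ℕ) (hYmeas : Measurable Y) (hY'meas : Measurable Y')
    (A : Set Ω) (hA : MeasurableSet A) (hApos : P A ≠ 0)
    (pd : ℝ) (hpd0 : 0 < pd) (hpd1 : pd ≤ 1)
    (hY2 : Integrable (fun ω => ((Y ω : ℝ)) ^ 2) (P[|A]))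
    (hthin : ∀ n k : ℕ, (P[|A]) {ω | Y' ω = k ∧ Y ω = n} =
      (P[|A]) {ω | Y ω = n} *
        ENNReal.ofReal ((n.choose k : ℝ) * pd ^ k * (1 - pd) ^ (n - k))) :
    (∫ ω, (Y' ω : ℝ) ∂(P[|A])) = pd * ∫ ω, (Y ω : ℝ) ∂(P[|A]) ∧
    variance (fun ω => (Y' ω : ℝ)) (P[|A]) / (∫ ω, (Y' ω : ℝ) ∂(P[|A])) ^ 2
        - 1 / (∫ ω, (Y' ω : ℝ) ∂(P[|A]))
      = variance (fun ω => (Y ω : ℝ)) (P[|A]) / (∫ ω, (Y ω : ℝ) ∂(P[|A])) ^ 2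
        - 1 / (∫ ω, (Y ω : ℝ) ∂(P[|A])) :=
  thinning_moment_parameters_general P Y Y' hYmeas hY'meas A hApos pd hpd0 hpd1 hY2 hthin
end
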